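/- Let S = V(f) ⊂ ℙ³(ℂ) with f = w²z² + w(y³ + z·Q₂(x,y)) + H₄(x,y,z), where Q₂ = Σ_{i+j=2} q_{ij}x^i y^j and H₄ = Σ_{i+j+k=4} h_{ijk}x^i y^j z^k, satisfying h₄₀₀ = q₂₀²/4, h₃₁₀ = q₂₀q₁₁/2, q₂₀ ≠ 0 and h₃₀₁ = 0, and suppose O = (0:0:0:1) is an isolated point of the singular locus of S. Then no line contained in S passes through O. -/
import Mathlib


open MvPolynomial

noncomputable section

abbrev P3 := Projectivization ℂ (Fin 4 → ℂ)

/-- The quotient topology on `ℙ³(ℂ)` induced from `ℂ⁴ ∖ {0}`. -/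
instance : TopologicalSpace P3 :=
  inferInstanceAs (TopologicalSpace (Quotient (projectivizationSetoid ℂ (Fin 4 → ℂ))))

/-- A line in `ℙ³(ℂ)`: the projectivization of a 2-dimensional linear subspace of `ℂ⁴`. -/
def IsLine (L : Set P3) : Prop :=
  ∃ W : Submodule ℂ (Fin 4 → ℂ), Module.finrank ℂ W = 2 ∧
    L = {P : P3 | P.submodule ≤ W}

/-- The zero set in `ℙ³(ℂ)` of a (homogeneous) polynomial. -/
def zeroSet (f : MvPolynomial (Fin 4) ℂ) : Set P3 :=
  {P | eval P.rep f = 0}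

/-- `P` is a singular point of `V(f)`: `P ∈ V(f)` and all first partials vanish at `P`. -/
def IsSingPt (f : MvPolynomial (Fin 4) ℂ) (P : P3) : Prop :=
  eval P.rep f = 0 ∧ ∀ i, eval P.rep (pderiv i f) = 0

/-- `P` is an isolated point of the set `T`. -/
def IsIsolatedPtOf (P : P3) (T : Set P3) : Prop :=
  P ∈ T ∧ ∃ U : Set P3, IsOpen U ∧ P ∈ U ∧ U ∩ T = {P}

/-- The point `O = (0:0:0:1)`. -/
def ptO : P3 :=
  Projectivization.mk ℂ ![0, 0, 0, 1] (by
    intro h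
    simpa using congrFun h 3)

/-- `Q₂ = Σ_{i+j=2} q_{ij} xⁱ yʲ` built from a coefficient function `q`. -/
def quadForm (q : ℕ → ℕ → ℂ) : MvPolynomial (Fin 4) ℂ :=
  ∑ i ∈ Finset.range 3, C (q i (2 - i)) * X 0 ^ i * X 1 ^ (2 - i)

/-- `H₄ = Σ_{i+j+k=4} h_{ijk} xⁱ yʲ zᵏ` built from a coefficient function `h`. -/
def quartForm (h : ℕ → ℕ → ℕ → ℂ) : MvPolynomial (Fin 4) ℂ :=
  ∑ i ∈ Finset.range 5, ∑ j ∈ Finset.range (5 - i),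
    C (h i j (4 - i - j)) * X 0 ^ i * X 1 ^ j * X 2 ^ (4 - i - j)


lemma q6_eval_smul (q : ℕ→ℕ→ℂ) (h : ℕ→ℕ→ℕ→ℂ) (k : ℂ) (u : Fin 4 → ℂ) :
    eval (k • u) (X 3 ^ 2 * X 2 ^ 2 + X 3 * (X 1 ^ 3 + X 2 * quadForm q) + quartForm h)
      = k ^ 4 * eval u (X 3 ^ 2 * X 2 ^ 2 + X 3 * (X 1 ^ 3 + X 2 * quadForm q) + quartForm h) := by
  simp [quadForm, quartForm, Finset.sum_range_succ]
  ring

lemma q6_eval_struct (q : ℕ→ℕ→ℂ) (h : ℕ→ℕ→ℕ→ℂ) (a b c T : ℂ) :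
    eval ![a,b,c,T] (X 3 ^ 2 * X 2 ^ 2 + X 3 * (X 1 ^ 3 + X 2 * quadForm q) + quartForm h)
      = c^2*T^2 + (b^3 + c * eval ![a,b,c,0] (quadForm q))*T + eval ![a,b,c,0] (quartForm h) := by
  simp [quadForm, quartForm, Finset.sum_range_succ]
  ring

lemma q6_eval_quart_a (h : ℕ→ℕ→ℕ→ℂ) (a : ℂ) :
    eval ![a,0,0,0] (quartForm h) = h 4 0 0 * a ^ 4 := by
  simp [quartForm, Finset.sum_range_succ]

theorem Q6_no_line_through_O
    (q : ℕ → ℕ → ℂ) (h : ℕ → ℕ → ℕ → ℂ)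
    (f : MvPolynomial (Fin 4) ℂ)
    (hf : f = X 3 ^ 2 * X 2 ^ 2 + X 3 * (X 1 ^ 3 + X 2 * quadForm q) + quartForm h)
    (h400 : h 4 0 0 = q 2 0 ^ 2 / 4) (h310 : h 3 1 0 = q 2 0 * q 1 1 / 2)
    (q20 : q 2 0 ≠ 0) (h301 : h 3 0 1 = 0)
    (hiso : IsIsolatedPtOf ptO {Q : P3 | IsSingPt f Q}) :
    ∀ L : Set P3, IsLine L → L ⊆ zeroSet f → ptO ∉ L := by
  intro L hL hsub hO
  obtain ⟨W, hW2, rfl⟩ := hL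
  -- the vector e₃
  set e : Fin 4 → ℂ := ![0,0,0,1] with he
  have he0 : e ≠ 0 := fun h0 => by simpa [he] using congrFun h0 3
  have heW : e ∈ W := by
    have h1 : ptO.submodule ≤ W := hO
    rw [ptO, Projectivization.submodule_mk] at h1
    exact h1 (Submodule.mem_span_singleton_self e)
  -- a vector in W not in span of e
  have hnle : ¬ (W ≤ ℂ ∙ e) := by
    intro hle
    have h1 : Module.finrank ℂ W ≤ Module.finrank ℂ (ℂ ∙ e) :=
      Submodule.finrank_mono hle
    rw [hW2, finrank_span_singleton he0] at h1
    omega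
  obtain ⟨v, hvW, hv⟩ := SetLike.not_le_iff_exists.mp hnle
  -- every nonzero vector of W is a zero of f
  have key : ∀ u : Fin 4 → ℂ, u ∈ W → u ≠ 0 → eval u f = 0 := by
    intro u huW hu
    have hP : Projectivization.mk ℂ u hu ∈ {P : P3 | P.submodule ≤ W} := by
      simpa [Projectivization.submodule_mk, Submodule.span_singleton_le_iff_mem] using huW
    have h0 : eval (Projectivization.mk ℂ u hu).rep f = 0 := hsub hP
    obtain ⟨k, hk⟩ := Projectivization.exists_smul_eq_mk_rep ℂ u hu
    rw [← hk, Units.smul_def, hf, q6_eval_smul] at h0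
    rw [hf]
    rcases mul_eq_zero.mp h0 with h1 | h1
    · exact absurd (pow_eq_zero_iff (n := 4) (by norm_num) |>.mp h1) k.ne_zero
    · exact h1
  set a := v 0 with ha'
  set b := v 1 with hb'
  set c := v 2 with hc'
  have habc : ¬(a = 0 ∧ b = 0 ∧ c = 0) := by
    rintro ⟨h0, h1, h2⟩
    apply hv
    have hveq : v = v 3 • e := by
      funext i
      fin_cases i <;> simp [he, ← ha', ← hb', ← hc', h0, h1, h2]
    rw [hveq]
    exact Submodule.smul_mem _ _ (Submodule.mem_span_singleton_self e)
  have huW : ∀ T : ℂ, (![a,b,c,T] : Fin 4 → ℂ) ∈ W := by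
    intro T
    have heq : (![a,b,c,T] : Fin 4 → ℂ) = v + (T - v 3) • e := by
      funext i
      fin_cases i <;> simp [he, ← ha', ← hb', ← hc']
    rw [heq]
    exact W.add_mem hvW (W.smul_mem _ heW)
  have hune : ∀ T : ℂ, (![a,b,c,T] : Fin 4 → ℂ) ≠ 0 := by
    intro T h0
    exact habc ⟨by simpa using congrFun h0 0, by simpa using congrFun h0 1,
      by simpa using congrFun h0 2⟩
  have E : ∀ T : ℂ, c^2*T^2 + (b^3 + c * eval ![a,b,c,0] (quadForm q))*T
      + eval ![a,b,c,0] (quartForm h) = 0 := by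
    intro T
    rw [← q6_eval_struct, ← hf]
    exact key _ (huW T) (hune T)
  have E0 := E 0
  have E1 := E 1
  have E2 := E (-1)
  have hc2 : c ^ 2 = 0 := by linear_combination (E1 + E2) / 2 - E0
  have hc0 : c = 0 := by
    have := pow_eq_zero_iff (n := 2) (by norm_num) |>.mp hc2
    exact this
  have hb3 : b ^ 3 = 0 := by
    rw [hc0] at E1 E0
    linear_combination E1 - E0
  have hb0 : b = 0 := pow_eq_zero_iff (n := 3) (by norm_num) |>.mp hb3
  have hH : eval ![a,b,c,0] (quartForm h) = 0 := by linear_combination E0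
  rw [hb0, hc0, q6_eval_quart_a, h400] at hH
  have ha0 : a = 0 := by
    have hqne : q 2 0 ^ 2 / 4 ≠ (0 : ℂ) := div_ne_zero (pow_ne_zero _ q20) (by norm_num)
    have h4 : a ^ 4 = 0 := (mul_eq_zero.mp hH).resolve_left hqne
    exact pow_eq_zero_iff (n := 4) (by norm_num) |>.mp h4
  exact habc ⟨ha0, hb0, hc0⟩
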